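/- Let U ⊆ ℍ be open and let ρ : U → ℝ be a smooth positive harmonic function (Δρ = 0). Then the curvature density of the self-dual harmonic-function-ansatz connection A⁻ satisfies Σ_{0 ≤ μ < ν ≤ 3} |F_{μν}|² = −(1/4)·Δ(Δ log ρ) on U, where |q|² denotes the squared quaternion norm. -/

import Mathlib

open scoped Quaternion

noncomputable section

/-- The quaternion units (1, i, j, k) as coordinate directions in ℍ ≅ ℝ⁴. -/
def qe : Fin 4 → ℍ[ℝ] := ![1, ⟨0,1,0,0⟩, ⟨0,0,1,0⟩, ⟨0,0,0,1⟩]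

/-- Partial derivative ∂_μ of a quaternion-valued function, in the direction `qe μ`. -/
def qpd (μ : Fin 4) (f : ℍ[ℝ] → ℍ[ℝ]) (x : ℍ[ℝ]) : ℍ[ℝ] := fderiv ℝ f x (qe μ)

/-- Partial derivative ∂_μ of a real-valued function on ℍ. -/
def rpd (μ : Fin 4) (f : ℍ[ℝ] → ℝ) (x : ℍ[ℝ]) : ℝ := fderiv ℝ f x (qe μ)

/-- Flat Laplacian Δ = ∂₀² + ∂₁² + ∂₂² + ∂₃² on ℍ ≅ ℝ⁴. -/
def qlap (f : ℍ[ℝ] → ℝ) (x : ℍ[ℝ]) : ℝ := ∑ μ : Fin 4, rpd μ (rpd μ f) x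

/-- Quaternionic Wirtinger-type derivative ∂f/∂x = (1/2)(∂₀f − i·∂₁f − j·∂₂f − k·∂₃f). -/
def qdx (f : ℍ[ℝ] → ℍ[ℝ]) (x : ℍ[ℝ]) : ℍ[ℝ] :=
  (2:ℝ)⁻¹ • (qpd 0 f x - qe 1 * qpd 1 f x - qe 2 * qpd 2 f x - qe 3 * qpd 3 f x)

/-- log ρ viewed as a quaternion-valued function. -/
def qlog (ρ : ℍ[ℝ] → ℝ) : ℍ[ℝ] → ℍ[ℝ] := fun x => ((Real.log (ρ x) : ℝ) : ℍ[ℝ])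

/-- log ρ as a real-valued function. -/
def rlog (ρ : ℍ[ℝ] → ℝ) : ℍ[ℝ] → ℝ := fun x => Real.log (ρ x)

/-- Components A_μ = −Im((∂(log ρ)/∂x)·e_μ) of the harmonic-function-ansatz connection A⁻. -/
def Aminus (ρ : ℍ[ℝ] → ℝ) (μ : Fin 4) (x : ℍ[ℝ]) : ℍ[ℝ] :=
  - Quaternion.im (qdx (qlog ρ) x * qe μ)

/-- Curvature components F_{μν} = ∂_μ A_ν − ∂_ν A_μ + A_μ A_ν − A_ν A_μ. -/
def curv (A : Fin 4 → ℍ[ℝ] → ℍ[ℝ]) (μ ν : Fin 4) (x : ℍ[ℝ]) : ℍ[ℝ] :=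
  qpd μ (A ν) x - qpd ν (A μ) x + A μ x * A ν x - A ν x * A μ x

/-! ### Toolkit lemmas -/

lemma qe0_re : (qe 0).re = 1 := rfl
lemma qe0_imI : (qe 0).imI = 0 := rfl
lemma qe0_imJ : (qe 0).imJ = 0 := rfl
lemma qe0_imK : (qe 0).imK = 0 := rfl
lemma qe1_re : (qe 1).re = 0 := rfl
lemma qe1_imI : (qe 1).imI = 1 := rfl
lemma qe1_imJ : (qe 1).imJ = 0 := rfl
lemma qe1_imK : (qe 1).imK = 0 := rfl
lemma qe2_re : (qe 2).re = 0 := rfl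
lemma qe2_imI : (qe 2).imI = 0 := rfl
lemma qe2_imJ : (qe 2).imJ = 1 := rfl
lemma qe2_imK : (qe 2).imK = 0 := rfl
lemma qe3_re : (qe 3).re = 0 := rfl
lemma qe3_imI : (qe 3).imI = 0 := rfl
lemma qe3_imJ : (qe 3).imJ = 0 := rfl
lemma qe3_imK : (qe 3).imK = 1 := rfl

lemma rpd_congr {f g : ℍ[ℝ] → ℝ} {x : ℍ[ℝ]} (h : f =ᶠ[nhds x] g) (μ : Fin 4) :
    rpd μ f x = rpd μ g x := by unfold rpd; rw [h.fderiv_eq]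

lemma qpd_congr {f g : ℍ[ℝ] → ℍ[ℝ]} {x : ℍ[ℝ]} (h : f =ᶠ[nhds x] g) (μ : Fin 4) :
    qpd μ f x = qpd μ g x := by unfold qpd; rw [h.fderiv_eq]

lemma rpd_add {f g : ℍ[ℝ] → ℝ} {x : ℍ[ℝ]} (hf : DifferentiableAt ℝ f x)
    (hg : DifferentiableAt ℝ g x) (μ : Fin 4) :
    rpd μ (fun y => f y + g y) x = rpd μ f x + rpd μ g x := by
  unfold rpd; rw [fderiv_fun_add hf hg]; rfl

lemma rpd_mul {f g : ℍ[ℝ] → ℝ} {x : ℍ[ℝ]} (hf : DifferentiableAt ℝ f x)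
    (hg : DifferentiableAt ℝ g x) (μ : Fin 4) :
    rpd μ (fun y => f y * g y) x = f x * rpd μ g x + g x * rpd μ f x := by
  unfold rpd; rw [fderiv_fun_mul hf hg]; simp [smul_eq_mul]

lemma rpd_zero (μ : Fin 4) (x : ℍ[ℝ]) : rpd μ (fun _ => (0:ℝ)) x = 0 := by
  unfold rpd; simp

lemma rpd_sum {f : Fin 4 → ℍ[ℝ] → ℝ} {x : ℍ[ℝ]}
    (h : ∀ i ∈ Finset.univ, DifferentiableAt ℝ (f i) x) (μ : Fin 4) :
    rpd μ (fun y => ∑ i : Fin 4, f i y) x = ∑ i : Fin 4, rpd μ (f i) x := by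
  unfold rpd; rw [fderiv_fun_sum h]; simp

lemma contDiffOn_rpd {U : Set ℍ[ℝ]} (hU : IsOpen U) {f : ℍ[ℝ] → ℝ}
    (hf : ContDiffOn ℝ (⊤ : ℕ∞) f U) (μ : Fin 4) : ContDiffOn ℝ (⊤ : ℕ∞) (rpd μ f) U := by
  have h1 : ContDiffOn ℝ (⊤ : ℕ∞) (fun x => fderiv ℝ f x) U := hf.fderiv_of_isOpen hU (by simp)
  exact h1.clm_apply contDiffOn_const

lemma diffAt {U : Set ℍ[ℝ]} (hU : IsOpen U) {f : ℍ[ℝ] → ℝ} (hf : ContDiffOn ℝ (⊤ : ℕ∞) f U)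
    {x : ℍ[ℝ]} (hx : x ∈ U) : DifferentiableAt ℝ f x :=
  (hf.differentiableOn (by simp)).differentiableAt (hU.mem_nhds hx)

lemma rpd_comm {U : Set ℍ[ℝ]} (hU : IsOpen U) {f : ℍ[ℝ] → ℝ}
    (hf : ContDiffOn ℝ (⊤ : ℕ∞) f U) {x : ℍ[ℝ]} (hx : x ∈ U) (a b : Fin 4) :
    rpd a (rpd b f) x = rpd b (rpd a f) x := by
  have hct : ContDiffAt ℝ (⊤ : ℕ∞) f x := hf.contDiffAt (hU.mem_nhds hx)
  have hsymm := hct.isSymmSndFDerivAt (by rw [minSmoothness_of_isRCLikeNormedField]; exact WithTop.coe_le_coe.2 le_top)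
  have hd : DifferentiableAt ℝ (fderiv ℝ f) x := by
    have h1 : ContDiffOn ℝ (⊤ : ℕ∞) (fun y => fderiv ℝ f y) U := hf.fderiv_of_isOpen hU (by simp)
    exact (h1.differentiableOn (by simp)).differentiableAt (hU.mem_nhds hx)
  have key : ∀ c d : Fin 4, rpd c (rpd d f) x = fderiv ℝ (fderiv ℝ f) x (qe c) (qe d) := by
    intro c d
    unfold rpd
    have h2 : (fun y => (fderiv ℝ f y) (qe d)) = fun y => (fderiv ℝ f y) ((fun _ => qe d) y) := rfl
    rw [h2, fderiv_clm_apply hd (differentiableAt_const _)]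
    simp
  rw [key a b, key b a, hsymm (qe a) (qe b)]

lemma qpd_three {c1 c2 c3 : ℍ[ℝ] → ℝ} {x : ℍ[ℝ]} (h1 : DifferentiableAt ℝ c1 x)
    (h2 : DifferentiableAt ℝ c2 x) (h3 : DifferentiableAt ℝ c3 x)
    (q1 q2 q3 : ℍ[ℝ]) (μ : Fin 4) :
    qpd μ (fun y => c1 y • q1 + c2 y • q2 + c3 y • q3) x
      = rpd μ c1 x • q1 + rpd μ c2 x • q2 + rpd μ c3 x • q3 := by
  unfold qpd rpd
  rw [fderiv_fun_add ((h1.smul_const q1).fun_add (h2.smul_const q2)) (h3.smul_const q3),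
      fderiv_fun_add (h1.smul_const q1) (h2.smul_const q2),
      fderiv_smul_const h1, fderiv_smul_const h2, fderiv_smul_const h3]
  rfl

lemma qpd_qlog {ρ : ℍ[ℝ] → ℝ} {x : ℍ[ℝ]} (h : DifferentiableAt ℝ (rlog ρ) x) (μ : Fin 4) :
    qpd μ (qlog ρ) x = ((rpd μ (rlog ρ) x : ℝ) : ℍ[ℝ]) := by
  rw [show qlog ρ = fun y => (rlog ρ y) • (1 : ℍ[ℝ]) by funext y; ext <;> simp [qlog, rlog]]
  unfold qpd rpd
  rw [fderiv_smul_const h]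
  ext <;> simp

lemma norm_sq_q (q : ℍ[ℝ]) : ‖q‖^2 = q.re^2 + q.imI^2 + q.imJ^2 + q.imK^2 := by
  rw [sq, ← Quaternion.normSq_eq_norm_mul_self, Quaternion.normSq_def']

set_option maxHeartbeats 1600000 in
/-- If ρ is a smooth positive harmonic super-potential on an open U ⊆ ℍ, then the curvature
density of the self-dual harmonic-function-ansatz connection A⁻ is
Σ_{μ<ν} |F_{μν}|² = −(1/4)·Δ(Δ log ρ) on U. -/
theorem curvature_density (U : Set ℍ[ℝ]) (hU : IsOpen U) (ρ : ℍ[ℝ] → ℝ)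
    (hρ : ContDiffOn ℝ (⊤ : ℕ∞) ρ U) (hpos : ∀ x ∈ U, 0 < ρ x)
    (hharm : ∀ x ∈ U, qlap ρ x = 0) :
    ∀ p ∈ U,
      ‖curv (Aminus ρ) 0 1 p‖^2 + ‖curv (Aminus ρ) 0 2 p‖^2 + ‖curv (Aminus ρ) 0 3 p‖^2 +
        ‖curv (Aminus ρ) 1 2 p‖^2 + ‖curv (Aminus ρ) 1 3 p‖^2 + ‖curv (Aminus ρ) 2 3 p‖^2
      = -(4:ℝ)⁻¹ * qlap (qlap (rlog ρ)) p := by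
  intro p hp
  have h0 : ∀ x ∈ U, ρ x ≠ 0 := fun x hx => ne_of_gt (hpos x hx)
  have hu : ContDiffOn ℝ (⊤ : ℕ∞) (rlog ρ) U := by unfold rlog; exact hρ.log h0
  have hc1 : ∀ a : Fin 4, ContDiffOn ℝ (⊤ : ℕ∞) (rpd a (rlog ρ)) U := fun a => contDiffOn_rpd hU hu a
  have hc2 : ∀ a b : Fin 4, ContDiffOn ℝ (⊤ : ℕ∞) (rpd a (rpd b (rlog ρ))) U :=
    fun a b => contDiffOn_rpd hU (hc1 b) a
  have hc3 : ∀ a b c : Fin 4, ContDiffOn ℝ (⊤ : ℕ∞) (rpd a (rpd b (rpd c (rlog ρ)))) U :=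
    fun a b c => contDiffOn_rpd hU (hc2 b c) a
  -- derivative of log
  have hlog : ∀ x ∈ U, ∀ μ : Fin 4, rpd μ (rlog ρ) x = (ρ x)⁻¹ * rpd μ ρ x := by
    intro x hx μ
    have h := (diffAt hU hρ hx).hasFDerivAt.log (h0 x hx)
    show fderiv ℝ (rlog ρ) x (qe μ) = _
    rw [show rlog ρ = (fun y => Real.log (ρ y)) from rfl, h.fderiv]
    simp [rpd]
  have hmulρ : ∀ μ : Fin 4, ∀ x ∈ U, rpd μ ρ x = ρ x * rpd μ (rlog ρ) x := by
    intro μ x hx; rw [hlog x hx μ, ← mul_assoc, mul_inv_cancel₀ (h0 x hx), one_mul]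
  have hd2ρ : ∀ μ : Fin 4, ∀ x ∈ U, rpd μ (rpd μ ρ) x
      = ρ x * rpd μ (rpd μ (rlog ρ)) x + rpd μ (rlog ρ) x * (ρ x * rpd μ (rlog ρ) x) := by
    intro μ x hx
    have hev : rpd μ ρ =ᶠ[nhds x] (fun y => ρ y * rpd μ (rlog ρ) y) :=
      Filter.eventuallyEq_of_mem (hU.mem_nhds hx) (fun y hy => hmulρ μ y hy)
    rw [rpd_congr hev μ, rpd_mul (diffAt hU hρ hx) (diffAt hU (hc1 μ) hx) μ, hmulρ μ x hx]
  -- harmonicity relation W = Δ(log ρ) + |∇ log ρ|² = 0 on U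
  have hW0 : ∀ x ∈ U, (∑ μ : Fin 4, rpd μ (rpd μ (rlog ρ)) x)
      + ∑ μ : Fin 4, rpd μ (rlog ρ) x * rpd μ (rlog ρ) x = 0 := by
    intro x hx
    have hh := hharm x hx
    unfold qlap at hh
    have e : ∑ μ : Fin 4, rpd μ (rpd μ ρ) x
        = ρ x * ((∑ μ : Fin 4, rpd μ (rpd μ (rlog ρ)) x)
          + ∑ μ : Fin 4, rpd μ (rlog ρ) x * rpd μ (rlog ρ) x) := by
      rw [Fin.sum_univ_four, Fin.sum_univ_four, Fin.sum_univ_four,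
          hd2ρ 0 x hx, hd2ρ 1 x hx, hd2ρ 2 x hx, hd2ρ 3 x hx]
      ring
    rw [e] at hh
    rcases mul_eq_zero.1 hh with h | h
    · exact absurd h (h0 x hx)
    · exact h
  have hWz : ∀ l : Fin 4, ∀ x ∈ U, rpd l (fun y => (∑ μ : Fin 4, rpd μ (rpd μ (rlog ρ)) y) + ∑ μ : Fin 4, rpd μ (rlog ρ) y * rpd μ (rlog ρ) y) x = 0 := by
    intro l x hx
    have hev : (fun y => (∑ μ : Fin 4, rpd μ (rpd μ (rlog ρ)) y) + ∑ μ : Fin 4, rpd μ (rlog ρ) y * rpd μ (rlog ρ) y) =ᶠ[nhds x] (fun _ => (0:ℝ)) :=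
      Filter.eventuallyEq_of_mem (hU.mem_nhds hx) (fun y hy => hW0 y hy)
    rw [rpd_congr hev l, rpd_zero]
  -- first derivative of W, expanded
  have hG : ∀ l : Fin 4, ∀ x ∈ U, rpd l (fun y => (∑ μ : Fin 4, rpd μ (rpd μ (rlog ρ)) y) + ∑ μ : Fin 4, rpd μ (rlog ρ) y * rpd μ (rlog ρ) y) x
      = (∑ μ : Fin 4, rpd l (rpd μ (rpd μ (rlog ρ))) x)
        + ∑ μ : Fin 4, (rpd μ (rlog ρ) x * rpd l (rpd μ (rlog ρ)) x
            + rpd μ (rlog ρ) x * rpd l (rpd μ (rlog ρ)) x) := by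
    intro l x hx
    rw [rpd_add (DifferentiableAt.fun_sum fun i _ => diffAt hU (hc2 i i) hx)
          (DifferentiableAt.fun_sum fun i _ => (diffAt hU (hc1 i) hx).fun_mul (diffAt hU (hc1 i) hx)) l,
        rpd_sum (fun i _ => diffAt hU (hc2 i i) hx) l,
        rpd_sum (fun i _ => (diffAt hU (hc1 i) hx).fun_mul (diffAt hU (hc1 i) hx)) l]
    congr 1
    exact Finset.sum_congr rfl fun μ _ => rpd_mul (diffAt hU (hc1 μ) hx) (diffAt hU (hc1 μ) hx) l
  have hGz : ∀ l : Fin 4, ∀ x ∈ U, (∑ μ : Fin 4, rpd l (rpd μ (rpd μ (rlog ρ))) x)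
      + ∑ μ : Fin 4, (rpd μ (rlog ρ) x * rpd l (rpd μ (rlog ρ)) x
          + rpd μ (rlog ρ) x * rpd l (rpd μ (rlog ρ)) x) = 0 := by
    intro l x hx
    rw [← hG l x hx]
    exact hWz l x hx
  -- second derivative of W (diagonal), expanded
  have hE2 : ∀ a : Fin 4, (∑ μ : Fin 4, rpd a (rpd a (rpd μ (rpd μ (rlog ρ)))) p)
      + ∑ μ : Fin 4, ((rpd μ (rlog ρ) p * rpd a (rpd a (rpd μ (rlog ρ))) p
            + rpd a (rpd μ (rlog ρ)) p * rpd a (rpd μ (rlog ρ)) p)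
          + (rpd μ (rlog ρ) p * rpd a (rpd a (rpd μ (rlog ρ))) p
            + rpd a (rpd μ (rlog ρ)) p * rpd a (rpd μ (rlog ρ)) p)) = 0 := by
    intro a
    have hz : rpd a (fun y => (∑ μ : Fin 4, rpd a (rpd μ (rpd μ (rlog ρ))) y) + ∑ μ : Fin 4, (rpd μ (rlog ρ) y * rpd a (rpd μ (rlog ρ)) y + rpd μ (rlog ρ) y * rpd a (rpd μ (rlog ρ)) y)) p = 0 := by
      have hev : (fun y => (∑ μ : Fin 4, rpd a (rpd μ (rpd μ (rlog ρ))) y) + ∑ μ : Fin 4, (rpd μ (rlog ρ) y * rpd a (rpd μ (rlog ρ)) y + rpd μ (rlog ρ) y * rpd a (rpd μ (rlog ρ)) y)) =ᶠ[nhds p] (fun _ => (0:ℝ)) :=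
        Filter.eventuallyEq_of_mem (hU.mem_nhds hp) (fun y hy => hGz a y hy)
      rw [rpd_congr hev a, rpd_zero]
    have hexp : rpd a (fun y => (∑ μ : Fin 4, rpd a (rpd μ (rpd μ (rlog ρ))) y) + ∑ μ : Fin 4, (rpd μ (rlog ρ) y * rpd a (rpd μ (rlog ρ)) y + rpd μ (rlog ρ) y * rpd a (rpd μ (rlog ρ)) y)) p
        = (∑ μ : Fin 4, rpd a (rpd a (rpd μ (rpd μ (rlog ρ)))) p)
          + ∑ μ : Fin 4, ((rpd μ (rlog ρ) p * rpd a (rpd a (rpd μ (rlog ρ))) p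
                + rpd a (rpd μ (rlog ρ)) p * rpd a (rpd μ (rlog ρ)) p)
              + (rpd μ (rlog ρ) p * rpd a (rpd a (rpd μ (rlog ρ))) p
                + rpd a (rpd μ (rlog ρ)) p * rpd a (rpd μ (rlog ρ)) p)) := by
      rw [rpd_add (DifferentiableAt.fun_sum fun i _ => diffAt hU (hc3 a i i) hp)
            (DifferentiableAt.fun_sum fun i _ =>
              (((diffAt hU (hc1 i) hp).fun_mul (diffAt hU (hc2 a i) hp)).fun_add
                ((diffAt hU (hc1 i) hp).fun_mul (diffAt hU (hc2 a i) hp)))) a,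
          rpd_sum (fun i _ => diffAt hU (hc3 a i i) hp) a,
          rpd_sum (fun i _ =>
            (((diffAt hU (hc1 i) hp).fun_mul (diffAt hU (hc2 a i) hp)).fun_add
              ((diffAt hU (hc1 i) hp).fun_mul (diffAt hU (hc2 a i) hp)))) a]
      congr 1
      refine Finset.sum_congr rfl fun μ _ => ?_
      rw [rpd_add ((diffAt hU (hc1 μ) hp).fun_mul (diffAt hU (hc2 a μ) hp))
            ((diffAt hU (hc1 μ) hp).fun_mul (diffAt hU (hc2 a μ) hp)) a,
          rpd_mul (diffAt hU (hc1 μ) hp) (diffAt hU (hc2 a μ) hp) a]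
    rw [← hexp]
    exact hz
  -- RHS expansion
  have hRHS : qlap (qlap (rlog ρ)) p
      = ∑ a : Fin 4, ∑ μ : Fin 4, rpd a (rpd a (rpd μ (rpd μ (rlog ρ)))) p := by
    have hqin : ∀ a : Fin 4, ∀ x ∈ U, rpd a (qlap (rlog ρ)) x
        = (fun y => ∑ μ : Fin 4, rpd a (rpd μ (rpd μ (rlog ρ))) y) x := by
      intro a x hx
      rw [show qlap (rlog ρ) = fun y => ∑ μ : Fin 4, rpd μ (rpd μ (rlog ρ)) y from rfl,
          rpd_sum (fun i _ => diffAt hU (hc2 i i) hx) a]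
    show ∑ a : Fin 4, rpd a (rpd a (qlap (rlog ρ))) p = _
    refine Finset.sum_congr rfl fun a _ => ?_
    have hev : rpd a (qlap (rlog ρ))
        =ᶠ[nhds p] (fun y => ∑ μ : Fin 4, rpd a (rpd μ (rpd μ (rlog ρ))) y) :=
      Filter.eventuallyEq_of_mem (hU.mem_nhds hp) (fun y hy => hqin a y hy)
    rw [rpd_congr hev a, rpd_sum (fun i _ => diffAt hU (hc3 a i i) hp) a]
  -- symmetry of derivatives
  have hs : ∀ a b : Fin 4, rpd a (rpd b (rlog ρ)) p = rpd b (rpd a (rlog ρ)) p :=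
    fun a b => rpd_comm hU hu hp a b
  have houter : ∀ a b c : Fin 4, rpd a (rpd b (rpd c (rlog ρ))) p
      = rpd b (rpd a (rpd c (rlog ρ))) p := fun a b c => rpd_comm hU (hc1 c) hp a b
  have hinner : ∀ a b c : Fin 4, rpd a (rpd b (rpd c (rlog ρ))) p
      = rpd a (rpd c (rpd b (rlog ρ))) p := by
    intro a b c
    have hev : rpd b (rpd c (rlog ρ)) =ᶠ[nhds p] rpd c (rpd b (rlog ρ)) :=
      Filter.eventuallyEq_of_mem (hU.mem_nhds hp) (fun y hy => rpd_comm hU hu hy b c)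
    exact rpd_congr hev a
  have tcA : ∀ x y : Fin 4, rpd x (rpd y (rpd y (rlog ρ))) p
      = rpd y (rpd y (rpd x (rlog ρ))) p := fun x y => (houter x y y).trans (hinner y x y)
  have tcB : ∀ a m : Fin 4, rpd a (rpd a (rpd m (rlog ρ))) p
      = rpd m (rpd a (rpd a (rlog ρ))) p := fun a m => (hinner a a m).trans (houter a m a)
  -- quaternionic derivative of qlog
  have hql : ∀ x ∈ U, ∀ μ : Fin 4, qpd μ (qlog ρ) x = ((rpd μ (rlog ρ) x : ℝ) : ℍ[ℝ]) :=
    fun x hx μ => qpd_qlog (diffAt hU hu hx) μ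
  have hB0 : ∀ x ∈ U, Aminus ρ 0 x = rpd 1 (rlog ρ) x • ((2:ℝ)⁻¹ • qe 1) + rpd 2 (rlog ρ) x • ((2:ℝ)⁻¹ • qe 2) + rpd 3 (rlog ρ) x • ((2:ℝ)⁻¹ • qe 3) := by
    intro x hx
    unfold Aminus qdx
    rw [hql x hx 0, hql x hx 1, hql x hx 2, hql x hx 3]
    ext <;> simp [qe0_re, qe0_imI, qe0_imJ, qe0_imK, qe1_re, qe1_imI, qe1_imJ, qe1_imK, qe2_re, qe2_imI, qe2_imJ, qe2_imK, qe3_re, qe3_imI, qe3_imJ, qe3_imK, Quaternion.re_mul, Quaternion.imI_mul, Quaternion.imJ_mul, Quaternion.imK_mul, Quaternion.re_smul] <;> ring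
  have hB1 : ∀ x ∈ U, Aminus ρ 1 x = rpd 0 (rlog ρ) x • (-((2:ℝ)⁻¹ • qe 1)) + rpd 3 (rlog ρ) x • ((2:ℝ)⁻¹ • qe 2) + rpd 2 (rlog ρ) x • (-((2:ℝ)⁻¹ • qe 3)) := by
    intro x hx
    unfold Aminus qdx
    rw [hql x hx 0, hql x hx 1, hql x hx 2, hql x hx 3]
    ext <;> simp [qe0_re, qe0_imI, qe0_imJ, qe0_imK, qe1_re, qe1_imI, qe1_imJ, qe1_imK, qe2_re, qe2_imI, qe2_imJ, qe2_imK, qe3_re, qe3_imI, qe3_imJ, qe3_imK, Quaternion.re_mul, Quaternion.imI_mul, Quaternion.imJ_mul, Quaternion.imK_mul, Quaternion.re_smul] <;> ring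
  have hB2 : ∀ x ∈ U, Aminus ρ 2 x = rpd 3 (rlog ρ) x • (-((2:ℝ)⁻¹ • qe 1)) + rpd 0 (rlog ρ) x • (-((2:ℝ)⁻¹ • qe 2)) + rpd 1 (rlog ρ) x • ((2:ℝ)⁻¹ • qe 3) := by
    intro x hx
    unfold Aminus qdx
    rw [hql x hx 0, hql x hx 1, hql x hx 2, hql x hx 3]
    ext <;> simp [qe0_re, qe0_imI, qe0_imJ, qe0_imK, qe1_re, qe1_imI, qe1_imJ, qe1_imK, qe2_re, qe2_imI, qe2_imJ, qe2_imK, qe3_re, qe3_imI, qe3_imJ, qe3_imK, Quaternion.re_mul, Quaternion.imI_mul, Quaternion.imJ_mul, Quaternion.imK_mul, Quaternion.re_smul] <;> ring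
  have hB3 : ∀ x ∈ U, Aminus ρ 3 x = rpd 2 (rlog ρ) x • ((2:ℝ)⁻¹ • qe 1) + rpd 1 (rlog ρ) x • (-((2:ℝ)⁻¹ • qe 2)) + rpd 0 (rlog ρ) x • (-((2:ℝ)⁻¹ • qe 3)) := by
    intro x hx
    unfold Aminus qdx
    rw [hql x hx 0, hql x hx 1, hql x hx 2, hql x hx 3]
    ext <;> simp [qe0_re, qe0_imI, qe0_imJ, qe0_imK, qe1_re, qe1_imI, qe1_imJ, qe1_imK, qe2_re, qe2_imI, qe2_imJ, qe2_imK, qe3_re, qe3_imI, qe3_imJ, qe3_imK, Quaternion.re_mul, Quaternion.imI_mul, Quaternion.imJ_mul, Quaternion.imK_mul, Quaternion.re_smul] <;> ring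
  have hqA0 : ∀ a : Fin 4, qpd a (Aminus ρ 0) p = rpd a (rpd 1 (rlog ρ)) p • ((2:ℝ)⁻¹ • qe 1) + rpd a (rpd 2 (rlog ρ)) p • ((2:ℝ)⁻¹ • qe 2) + rpd a (rpd 3 (rlog ρ)) p • ((2:ℝ)⁻¹ • qe 3) := by
    intro a
    have hev : Aminus ρ 0 =ᶠ[nhds p]
        (fun x => rpd 1 (rlog ρ) x • ((2:ℝ)⁻¹ • qe 1) + rpd 2 (rlog ρ) x • ((2:ℝ)⁻¹ • qe 2) + rpd 3 (rlog ρ) x • ((2:ℝ)⁻¹ • qe 3)) :=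
      Filter.eventuallyEq_of_mem (hU.mem_nhds hp) (fun y hy => hB0 y hy)
    rw [qpd_congr hev a,
        qpd_three (diffAt hU (hc1 1) hp) (diffAt hU (hc1 2) hp) (diffAt hU (hc1 3) hp) _ _ _ a]
  have hAp0 := hB0 p hp
  have hqA1 : ∀ a : Fin 4, qpd a (Aminus ρ 1) p = rpd a (rpd 0 (rlog ρ)) p • (-((2:ℝ)⁻¹ • qe 1)) + rpd a (rpd 3 (rlog ρ)) p • ((2:ℝ)⁻¹ • qe 2) + rpd a (rpd 2 (rlog ρ)) p • (-((2:ℝ)⁻¹ • qe 3)) := by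
    intro a
    have hev : Aminus ρ 1 =ᶠ[nhds p]
        (fun x => rpd 0 (rlog ρ) x • (-((2:ℝ)⁻¹ • qe 1)) + rpd 3 (rlog ρ) x • ((2:ℝ)⁻¹ • qe 2) + rpd 2 (rlog ρ) x • (-((2:ℝ)⁻¹ • qe 3))) :=
      Filter.eventuallyEq_of_mem (hU.mem_nhds hp) (fun y hy => hB1 y hy)
    rw [qpd_congr hev a,
        qpd_three (diffAt hU (hc1 0) hp) (diffAt hU (hc1 3) hp) (diffAt hU (hc1 2) hp) _ _ _ a]
  have hAp1 := hB1 p hp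
  have hqA2 : ∀ a : Fin 4, qpd a (Aminus ρ 2) p = rpd a (rpd 3 (rlog ρ)) p • (-((2:ℝ)⁻¹ • qe 1)) + rpd a (rpd 0 (rlog ρ)) p • (-((2:ℝ)⁻¹ • qe 2)) + rpd a (rpd 1 (rlog ρ)) p • ((2:ℝ)⁻¹ • qe 3) := by
    intro a
    have hev : Aminus ρ 2 =ᶠ[nhds p]
        (fun x => rpd 3 (rlog ρ) x • (-((2:ℝ)⁻¹ • qe 1)) + rpd 0 (rlog ρ) x • (-((2:ℝ)⁻¹ • qe 2)) + rpd 1 (rlog ρ) x • ((2:ℝ)⁻¹ • qe 3)) :=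
      Filter.eventuallyEq_of_mem (hU.mem_nhds hp) (fun y hy => hB2 y hy)
    rw [qpd_congr hev a,
        qpd_three (diffAt hU (hc1 3) hp) (diffAt hU (hc1 0) hp) (diffAt hU (hc1 1) hp) _ _ _ a]
  have hAp2 := hB2 p hp
  have hqA3 : ∀ a : Fin 4, qpd a (Aminus ρ 3) p = rpd a (rpd 2 (rlog ρ)) p • ((2:ℝ)⁻¹ • qe 1) + rpd a (rpd 1 (rlog ρ)) p • (-((2:ℝ)⁻¹ • qe 2)) + rpd a (rpd 0 (rlog ρ)) p • (-((2:ℝ)⁻¹ • qe 3)) := by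
    intro a
    have hev : Aminus ρ 3 =ᶠ[nhds p]
        (fun x => rpd 2 (rlog ρ) x • ((2:ℝ)⁻¹ • qe 1) + rpd 1 (rlog ρ) x • (-((2:ℝ)⁻¹ • qe 2)) + rpd 0 (rlog ρ) x • (-((2:ℝ)⁻¹ • qe 3))) :=
      Filter.eventuallyEq_of_mem (hU.mem_nhds hp) (fun y hy => hB3 y hy)
    rw [qpd_congr hev a,
        qpd_three (diffAt hU (hc1 2) hp) (diffAt hU (hc1 1) hp) (diffAt hU (hc1 0) hp) _ _ _ a]
  have hAp3 := hB3 p hp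
  have hF01 : ‖curv (Aminus ρ) 0 1 p‖^2 = ((1:ℝ)/4) * (rpd 0 (rlog ρ) p) * (rpd 0 (rlog ρ) p) * (rpd 2 (rlog ρ) p) * (rpd 2 (rlog ρ) p) + ((1:ℝ)/4) * (rpd 0 (rlog ρ) p) * (rpd 0 (rlog ρ) p) * (rpd 3 (rlog ρ) p) * (rpd 3 (rlog ρ) p) + ((-1:ℝ)/2) * (rpd 0 (rlog ρ) p) * (rpd 0 (rpd 2 (rlog ρ)) p) * (rpd 2 (rlog ρ) p) + ((-1:ℝ)/2) * (rpd 0 (rlog ρ) p) * (rpd 0 (rpd 3 (rlog ρ)) p) * (rpd 3 (rlog ρ) p) + ((1:ℝ)/2) * (rpd 0 (rlog ρ) p) * (rpd 1 (rpd 2 (rlog ρ)) p) * (rpd 3 (rlog ρ) p) + ((-1:ℝ)/2) * (rpd 0 (rlog ρ) p) * (rpd 1 (rpd 3 (rlog ρ)) p) * (rpd 2 (rlog ρ) p) + ((1:ℝ)/4) * (rpd 0 (rpd 0 (rlog ρ)) p) * (rpd 0 (rpd 0 (rlog ρ)) p) + ((1:ℝ)/2) * (rpd 0 (rpd 0 (rlog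 ρ)) p) * (rpd 1 (rpd 1 (rlog ρ)) p) + ((1:ℝ)/2) * (rpd 0 (rpd 0 (rlog ρ)) p) * (rpd 2 (rlog ρ) p) * (rpd 2 (rlog ρ) p) + ((1:ℝ)/2) * (rpd 0 (rpd 0 (rlog ρ)) p) * (rpd 3 (rlog ρ) p) * (rpd 3 (rlog ρ) p) + ((1:ℝ)/4) * (rpd 0 (rpd 2 (rlog ρ)) p) * (rpd 0 (rpd 2 (rlog ρ)) p) + ((-1:ℝ)/2) * (rpd 0 (rpd 2 (rlog ρ)) p) * (rpd 1 (rlog ρ) p) * (rpd 3 (rlog ρ) p) + ((1:ℝ)/2) * (rpd 0 (rpd 2 (rlog ρ)) p) * (rpd 1 (rpd 3 (rlog ρ)) p) + ((1:ℝ)/4) * (rpd 0 (rpd 3 (rlog ρ)) p) * (rpd 0 (rpd 3 (rlog ρ)) p) + ((1:ℝ)/2) * (rpd 0 (rpd 3 (rlog ρ)) p) * (rpd 1 (rlog ρ) p) * (rpd 2 (rlog ρ) p) + ((-1:ℝ)/2) * (rpd 0 (rpd 3 (rlog ρ)) p) * (rpd 1 (rpd 2 (rlog ρ)) p) + ((1:ℝ)/4)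 * (rpd 1 (rlog ρ) p) * (rpd 1 (rlog ρ) p) * (rpd 2 (rlog ρ) p) * (rpd 2 (rlog ρ) p) + ((1:ℝ)/4) * (rpd 1 (rlog ρ) p) * (rpd 1 (rlog ρ) p) * (rpd 3 (rlog ρ) p) * (rpd 3 (rlog ρ) p) + ((-1:ℝ)/2) * (rpd 1 (rlog ρ) p) * (rpd 1 (rpd 2 (rlog ρ)) p) * (rpd 2 (rlog ρ) p) + ((-1:ℝ)/2) * (rpd 1 (rlog ρ) p) * (rpd 1 (rpd 3 (rlog ρ)) p) * (rpd 3 (rlog ρ) p) + ((1:ℝ)/4) * (rpd 1 (rpd 1 (rlog ρ)) p) * (rpd 1 (rpd 1 (rlog ρ)) p) + ((1:ℝ)/2) * (rpd 1 (rpd 1 (rlog ρ)) p) * (rpd 2 (rlog ρ) p) * (rpd 2 (rlog ρ) p) + ((1:ℝ)/2) * (rpd 1 (rpd 1 (rlog ρ)) p) * (rpd 3 (rlog ρ) p) * (rpd 3 (rlog ρ) p) + ((1:ℝ)/4) * (rpd 1 (rpd 2 (rlog ρ)) p) * (rpd 1 (rpd 2 (rlog ρ)) p) + ((1:ℝ)/4)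 * (rpd 1 (rpd 3 (rlog ρ)) p) * (rpd 1 (rpd 3 (rlog ρ)) p) + ((1:ℝ)/4) * (rpd 2 (rlog ρ) p) * (rpd 2 (rlog ρ) p) * (rpd 2 (rlog ρ) p) * (rpd 2 (rlog ρ) p) + ((1:ℝ)/2) * (rpd 2 (rlog ρ) p) * (rpd 2 (rlog ρ) p) * (rpd 3 (rlog ρ) p) * (rpd 3 (rlog ρ) p) + ((1:ℝ)/4) * (rpd 3 (rlog ρ) p) * (rpd 3 (rlog ρ) p) * (rpd 3 (rlog ρ) p) * (rpd 3 (rlog ρ) p) := by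
    rw [show curv (Aminus ρ) 0 1 p = qpd 0 (Aminus ρ 1) p - qpd 1 (Aminus ρ 0) p
        + Aminus ρ 0 p * Aminus ρ 1 p - Aminus ρ 1 p * Aminus ρ 0 p from rfl,
      hqA1 0, hqA0 1, hAp0, hAp1, norm_sq_q]
    simp only [qe0_re, qe0_imI, qe0_imJ, qe0_imK, qe1_re, qe1_imI, qe1_imJ, qe1_imK, qe2_re, qe2_imI, qe2_imJ, qe2_imK, qe3_re, qe3_imI, qe3_imJ, qe3_imK, Matrix.cons_val_one, Matrix.cons_val_two, Matrix.cons_val_three,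
      Matrix.head_cons, Matrix.tail_cons, Matrix.cons_val_zero,
      Quaternion.re_sub, Quaternion.re_add, Quaternion.re_mul, Quaternion.re_smul,
      Quaternion.imI_sub, Quaternion.imI_add, Quaternion.imI_mul, Quaternion.imI_smul,
      Quaternion.imJ_sub, Quaternion.imJ_add, Quaternion.imJ_mul, Quaternion.imJ_smul,
      Quaternion.imK_sub, Quaternion.imK_add, Quaternion.imK_mul, Quaternion.imK_smul,
      Quaternion.re_neg, Quaternion.imI_neg, Quaternion.imJ_neg, Quaternion.imK_neg,
      smul_eq_mul]
    ring
  have hF02 : ‖curv (Aminus ρ) 0 2 p‖^2 = ((1:ℝ)/4) * (rpd 0 (rlog ρ) p) * (rpd 0 (rlog ρ) p) * (rpd 1 (rlog ρ) p) * (rpd 1 (rlog ρ) p) + ((1:ℝ)/4) * (rpd 0 (rlog ρ) p) * (rpd 0 (rlog ρ) p) * (rpd 3 (rlog ρ) p) * (rpd 3 (rlog ρ) p) + ((-1:ℝ)/2) * (rpd 0 (rlog ρ) p) * (rpd 0 (rpd 1 (rlog ρ)) p) * (rpd 1 (rlog ρ) p) + ((-1:ℝ)/2) * (rpd 0 (rlog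 ρ) p) * (rpd 0 (rpd 3 (rlog ρ)) p) * (rpd 3 (rlog ρ) p) + ((1:ℝ)/2) * (rpd 0 (rlog ρ) p) * (rpd 1 (rlog ρ) p) * (rpd 2 (rpd 3 (rlog ρ)) p) + ((-1:ℝ)/2) * (rpd 0 (rlog ρ) p) * (rpd 2 (rpd 1 (rlog ρ)) p) * (rpd 3 (rlog ρ) p) + ((1:ℝ)/4) * (rpd 0 (rpd 0 (rlog ρ)) p) * (rpd 0 (rpd 0 (rlog ρ)) p) + ((1:ℝ)/2) * (rpd 0 (rpd 0 (rlog ρ)) p) * (rpd 1 (rlog ρ) p) * (rpd 1 (rlog ρ) p) + ((1:ℝ)/2) * (rpd 0 (rpd 0 (rlog ρ)) p) * (rpd 2 (rpd 2 (rlog ρ)) p) + ((1:ℝ)/2) * (rpd 0 (rpd 0 (rlog ρ)) p) * (rpd 3 (rlog ρ) p) * (rpd 3 (rlog ρ) p) + ((1:ℝ)/4) * (rpd 0 (rpd 1 (rlog ρ)) p) * (rpd 0 (rpd 1 (rlog ρ)) p) + ((1:ℝ)/2) * (rpd 0 (rpd 1 (rlog ρ)) p) * (rpd 2 (rlog ρ)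 p) * (rpd 3 (rlog ρ) p) + ((-1:ℝ)/2) * (rpd 0 (rpd 1 (rlog ρ)) p) * (rpd 2 (rpd 3 (rlog ρ)) p) + ((1:ℝ)/4) * (rpd 0 (rpd 3 (rlog ρ)) p) * (rpd 0 (rpd 3 (rlog ρ)) p) + ((-1:ℝ)/2) * (rpd 0 (rpd 3 (rlog ρ)) p) * (rpd 1 (rlog ρ) p) * (rpd 2 (rlog ρ) p) + ((1:ℝ)/2) * (rpd 0 (rpd 3 (rlog ρ)) p) * (rpd 2 (rpd 1 (rlog ρ)) p) + ((1:ℝ)/4) * (rpd 1 (rlog ρ) p) * (rpd 1 (rlog ρ) p) * (rpd 1 (rlog ρ) p) * (rpd 1 (rlog ρ) p) + ((1:ℝ)/4) * (rpd 1 (rlog ρ) p) * (rpd 1 (rlog ρ) p) * (rpd 2 (rlog ρ) p) * (rpd 2 (rlog ρ) p) + ((1:ℝ)/2) * (rpd 1 (rlog ρ) p) * (rpd 1 (rlog ρ) p) * (rpd 2 (rpd 2 (rlog ρ)) p) + ((1:ℝ)/2) * (rpd 1 (rlog ρ) p) * (rpd 1 (rlog ρ) p) * (rpd 3 (rlog ρ)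 p) * (rpd 3 (rlog ρ) p) + ((-1:ℝ)/2) * (rpd 1 (rlog ρ) p) * (rpd 2 (rlog ρ) p) * (rpd 2 (rpd 1 (rlog ρ)) p) + ((1:ℝ)/4) * (rpd 2 (rlog ρ) p) * (rpd 2 (rlog ρ) p) * (rpd 3 (rlog ρ) p) * (rpd 3 (rlog ρ) p) + ((-1:ℝ)/2) * (rpd 2 (rlog ρ) p) * (rpd 2 (rpd 3 (rlog ρ)) p) * (rpd 3 (rlog ρ) p) + ((1:ℝ)/4) * (rpd 2 (rpd 1 (rlog ρ)) p) * (rpd 2 (rpd 1 (rlog ρ)) p) + ((1:ℝ)/4) * (rpd 2 (rpd 2 (rlog ρ)) p) * (rpd 2 (rpd 2 (rlog ρ)) p) + ((1:ℝ)/2) * (rpd 2 (rpd 2 (rlog ρ)) p) * (rpd 3 (rlog ρ) p) * (rpd 3 (rlog ρ) p) + ((1:ℝ)/4) * (rpd 2 (rpd 3 (rlog ρ)) p) * (rpd 2 (rpd 3 (rlog ρ)) p) + ((1:ℝ)/4) * (rpd 3 (rlog ρ) p) * (rpd 3 (rlog ρ) p) * (rpd 3 (rlog ρ) p) * (rpd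 3 (rlog ρ) p) := by
    rw [show curv (Aminus ρ) 0 2 p = qpd 0 (Aminus ρ 2) p - qpd 2 (Aminus ρ 0) p
        + Aminus ρ 0 p * Aminus ρ 2 p - Aminus ρ 2 p * Aminus ρ 0 p from rfl,
      hqA2 0, hqA0 2, hAp0, hAp2, norm_sq_q]
    simp only [qe0_re, qe0_imI, qe0_imJ, qe0_imK, qe1_re, qe1_imI, qe1_imJ, qe1_imK, qe2_re, qe2_imI, qe2_imJ, qe2_imK, qe3_re, qe3_imI, qe3_imJ, qe3_imK, Matrix.cons_val_one, Matrix.cons_val_two, Matrix.cons_val_three,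
      Matrix.head_cons, Matrix.tail_cons, Matrix.cons_val_zero,
      Quaternion.re_sub, Quaternion.re_add, Quaternion.re_mul, Quaternion.re_smul,
      Quaternion.imI_sub, Quaternion.imI_add, Quaternion.imI_mul, Quaternion.imI_smul,
      Quaternion.imJ_sub, Quaternion.imJ_add, Quaternion.imJ_mul, Quaternion.imJ_smul,
      Quaternion.imK_sub, Quaternion.imK_add, Quaternion.imK_mul, Quaternion.imK_smul,
      Quaternion.re_neg, Quaternion.imI_neg, Quaternion.imJ_neg, Quaternion.imK_neg,
      smul_eq_mul]
    ring
  have hF03 : ‖curv (Aminus ρ) 0 3 p‖^2 = ((1:ℝ)/4) * (rpd 0 (rlog ρ) p) * (rpd 0 (rlog ρ) p) * (rpd 1 (rlog ρ) p) * (rpd 1 (rlog ρ) p) + ((1:ℝ)/4) * (rpd 0 (rlog ρ) p) * (rpd 0 (rlog ρ) p) * (rpd 2 (rlog ρ) p) * (rpd 2 (rlog ρ) p) + ((-1:ℝ)/2) * (rpd 0 (rlog ρ) p) * (rpd 0 (rpd 1 (rlog ρ)) p) * (rpd 1 (rlog ρ) p) + ((-1:ℝ)/2) * (rpd 0 (rlog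 ρ) p) * (rpd 0 (rpd 2 (rlog ρ)) p) * (rpd 2 (rlog ρ) p) + ((-1:ℝ)/2) * (rpd 0 (rlog ρ) p) * (rpd 1 (rlog ρ) p) * (rpd 3 (rpd 2 (rlog ρ)) p) + ((1:ℝ)/2) * (rpd 0 (rlog ρ) p) * (rpd 2 (rlog ρ) p) * (rpd 3 (rpd 1 (rlog ρ)) p) + ((1:ℝ)/4) * (rpd 0 (rpd 0 (rlog ρ)) p) * (rpd 0 (rpd 0 (rlog ρ)) p) + ((1:ℝ)/2) * (rpd 0 (rpd 0 (rlog ρ)) p) * (rpd 1 (rlog ρ) p) * (rpd 1 (rlog ρ) p) + ((1:ℝ)/2) * (rpd 0 (rpd 0 (rlog ρ)) p) * (rpd 2 (rlog ρ) p) * (rpd 2 (rlog ρ) p) + ((1:ℝ)/2) * (rpd 0 (rpd 0 (rlog ρ)) p) * (rpd 3 (rpd 3 (rlog ρ)) p) + ((1:ℝ)/4) * (rpd 0 (rpd 1 (rlog ρ)) p) * (rpd 0 (rpd 1 (rlog ρ)) p) + ((-1:ℝ)/2) * (rpd 0 (rpd 1 (rlog ρ)) p) * (rpd 2 (rlog ρ)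 p) * (rpd 3 (rlog ρ) p) + ((1:ℝ)/2) * (rpd 0 (rpd 1 (rlog ρ)) p) * (rpd 3 (rpd 2 (rlog ρ)) p) + ((1:ℝ)/4) * (rpd 0 (rpd 2 (rlog ρ)) p) * (rpd 0 (rpd 2 (rlog ρ)) p) + ((1:ℝ)/2) * (rpd 0 (rpd 2 (rlog ρ)) p) * (rpd 1 (rlog ρ) p) * (rpd 3 (rlog ρ) p) + ((-1:ℝ)/2) * (rpd 0 (rpd 2 (rlog ρ)) p) * (rpd 3 (rpd 1 (rlog ρ)) p) + ((1:ℝ)/4) * (rpd 1 (rlog ρ) p) * (rpd 1 (rlog ρ) p) * (rpd 1 (rlog ρ) p) * (rpd 1 (rlog ρ) p) + ((1:ℝ)/2) * (rpd 1 (rlog ρ) p) * (rpd 1 (rlog ρ) p) * (rpd 2 (rlog ρ) p) * (rpd 2 (rlog ρ) p) + ((1:ℝ)/4) * (rpd 1 (rlog ρ) p) * (rpd 1 (rlog ρ) p) * (rpd 3 (rlog ρ) p) * (rpd 3 (rlog ρ) p) + ((1:ℝ)/2) * (rpd 1 (rlog ρ) p) * (rpd 1 (rlog ρ) p) * (rpd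 3 (rpd 3 (rlog ρ)) p) + ((-1:ℝ)/2) * (rpd 1 (rlog ρ) p) * (rpd 3 (rlog ρ) p) * (rpd 3 (rpd 1 (rlog ρ)) p) + ((1:ℝ)/4) * (rpd 2 (rlog ρ) p) * (rpd 2 (rlog ρ) p) * (rpd 2 (rlog ρ) p) * (rpd 2 (rlog ρ) p) + ((1:ℝ)/4) * (rpd 2 (rlog ρ) p) * (rpd 2 (rlog ρ) p) * (rpd 3 (rlog ρ) p) * (rpd 3 (rlog ρ) p) + ((1:ℝ)/2) * (rpd 2 (rlog ρ) p) * (rpd 2 (rlog ρ) p) * (rpd 3 (rpd 3 (rlog ρ)) p) + ((-1:ℝ)/2) * (rpd 2 (rlog ρ) p) * (rpd 3 (rlog ρ) p) * (rpd 3 (rpd 2 (rlog ρ)) p) + ((1:ℝ)/4) * (rpd 3 (rpd 1 (rlog ρ)) p) * (rpd 3 (rpd 1 (rlog ρ)) p) + ((1:ℝ)/4) * (rpd 3 (rpd 2 (rlog ρ)) p) * (rpd 3 (rpd 2 (rlog ρ)) p) + ((1:ℝ)/4) * (rpd 3 (rpd 3 (rlog ρ)) p) * (rpd 3 (rpd 3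 (rlog ρ)) p) := by
    rw [show curv (Aminus ρ) 0 3 p = qpd 0 (Aminus ρ 3) p - qpd 3 (Aminus ρ 0) p
        + Aminus ρ 0 p * Aminus ρ 3 p - Aminus ρ 3 p * Aminus ρ 0 p from rfl,
      hqA3 0, hqA0 3, hAp0, hAp3, norm_sq_q]
    simp only [qe0_re, qe0_imI, qe0_imJ, qe0_imK, qe1_re, qe1_imI, qe1_imJ, qe1_imK, qe2_re, qe2_imI, qe2_imJ, qe2_imK, qe3_re, qe3_imI, qe3_imJ, qe3_imK, Matrix.cons_val_one, Matrix.cons_val_two, Matrix.cons_val_three,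
      Matrix.head_cons, Matrix.tail_cons, Matrix.cons_val_zero,
      Quaternion.re_sub, Quaternion.re_add, Quaternion.re_mul, Quaternion.re_smul,
      Quaternion.imI_sub, Quaternion.imI_add, Quaternion.imI_mul, Quaternion.imI_smul,
      Quaternion.imJ_sub, Quaternion.imJ_add, Quaternion.imJ_mul, Quaternion.imJ_smul,
      Quaternion.imK_sub, Quaternion.imK_add, Quaternion.imK_mul, Quaternion.imK_smul,
      Quaternion.re_neg, Quaternion.imI_neg, Quaternion.imJ_neg, Quaternion.imK_neg,
      smul_eq_mul]
    ring
  have hF12 : ‖curv (Aminus ρ) 1 2 p‖^2 = ((1:ℝ)/4) * (rpd 0 (rlog ρ) p) * (rpd 0 (rlog ρ) p) * (rpd 0 (rlog ρ) p) * (rpd 0 (rlog ρ) p) + ((1:ℝ)/4) * (rpd 0 (rlog ρ) p) * (rpd 0 (rlog ρ) p) * (rpd 1 (rlog ρ) p) * (rpd 1 (rlog ρ) p) + ((1:ℝ)/2) * (rpd 0 (rlog ρ) p) * (rpd 0 (rlog ρ) p) * (rpd 1 (rpd 1 (rlog ρ)) p) + ((1:ℝ)/4) * (rpd 0 (rlog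 ρ) p) * (rpd 0 (rlog ρ) p) * (rpd 2 (rlog ρ) p) * (rpd 2 (rlog ρ) p) + ((1:ℝ)/2) * (rpd 0 (rlog ρ) p) * (rpd 0 (rlog ρ) p) * (rpd 2 (rpd 2 (rlog ρ)) p) + ((1:ℝ)/2) * (rpd 0 (rlog ρ) p) * (rpd 0 (rlog ρ) p) * (rpd 3 (rlog ρ) p) * (rpd 3 (rlog ρ) p) + ((-1:ℝ)/2) * (rpd 0 (rlog ρ) p) * (rpd 1 (rlog ρ) p) * (rpd 1 (rpd 0 (rlog ρ)) p) + ((-1:ℝ)/2) * (rpd 0 (rlog ρ) p) * (rpd 1 (rlog ρ) p) * (rpd 2 (rpd 3 (rlog ρ)) p) + ((1:ℝ)/2) * (rpd 0 (rlog ρ) p) * (rpd 1 (rpd 3 (rlog ρ)) p) * (rpd 2 (rlog ρ) p) + ((-1:ℝ)/2) * (rpd 0 (rlog ρ) p) * (rpd 2 (rlog ρ) p) * (rpd 2 (rpd 0 (rlog ρ)) p) + ((1:ℝ)/4) * (rpd 1 (rlog ρ) p) * (rpd 1 (rlog ρ) p) * (rpd 3 (rlog ρ) p) * (rpd 3 (rlog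 ρ) p) + ((-1:ℝ)/2) * (rpd 1 (rlog ρ) p) * (rpd 1 (rpd 3 (rlog ρ)) p) * (rpd 3 (rlog ρ) p) + ((1:ℝ)/2) * (rpd 1 (rlog ρ) p) * (rpd 2 (rpd 0 (rlog ρ)) p) * (rpd 3 (rlog ρ) p) + ((1:ℝ)/4) * (rpd 1 (rpd 0 (rlog ρ)) p) * (rpd 1 (rpd 0 (rlog ρ)) p) + ((-1:ℝ)/2) * (rpd 1 (rpd 0 (rlog ρ)) p) * (rpd 2 (rlog ρ) p) * (rpd 3 (rlog ρ) p) + ((1:ℝ)/2) * (rpd 1 (rpd 0 (rlog ρ)) p) * (rpd 2 (rpd 3 (rlog ρ)) p) + ((1:ℝ)/4) * (rpd 1 (rpd 1 (rlog ρ)) p) * (rpd 1 (rpd 1 (rlog ρ)) p) + ((1:ℝ)/2) * (rpd 1 (rpd 1 (rlog ρ)) p) * (rpd 2 (rpd 2 (rlog ρ)) p) + ((1:ℝ)/2) * (rpd 1 (rpd 1 (rlog ρ)) p) * (rpd 3 (rlog ρ) p) * (rpd 3 (rlog ρ) p) + ((1:ℝ)/4) * (rpd 1 (rpd 3 (rlog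 ρ)) p) * (rpd 1 (rpd 3 (rlog ρ)) p) + ((-1:ℝ)/2) * (rpd 1 (rpd 3 (rlog ρ)) p) * (rpd 2 (rpd 0 (rlog ρ)) p) + ((1:ℝ)/4) * (rpd 2 (rlog ρ) p) * (rpd 2 (rlog ρ) p) * (rpd 3 (rlog ρ) p) * (rpd 3 (rlog ρ) p) + ((-1:ℝ)/2) * (rpd 2 (rlog ρ) p) * (rpd 2 (rpd 3 (rlog ρ)) p) * (rpd 3 (rlog ρ) p) + ((1:ℝ)/4) * (rpd 2 (rpd 0 (rlog ρ)) p) * (rpd 2 (rpd 0 (rlog ρ)) p) + ((1:ℝ)/4) * (rpd 2 (rpd 2 (rlog ρ)) p) * (rpd 2 (rpd 2 (rlog ρ)) p) + ((1:ℝ)/2) * (rpd 2 (rpd 2 (rlog ρ)) p) * (rpd 3 (rlog ρ) p) * (rpd 3 (rlog ρ) p) + ((1:ℝ)/4) * (rpd 2 (rpd 3 (rlog ρ)) p) * (rpd 2 (rpd 3 (rlog ρ)) p) + ((1:ℝ)/4) * (rpd 3 (rlog ρ) p) * (rpd 3 (rlog ρ) p) * (rpd 3 (rlog ρ) p) * (rpd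 3 (rlog ρ) p) := by
    rw [show curv (Aminus ρ) 1 2 p = qpd 1 (Aminus ρ 2) p - qpd 2 (Aminus ρ 1) p
        + Aminus ρ 1 p * Aminus ρ 2 p - Aminus ρ 2 p * Aminus ρ 1 p from rfl,
      hqA2 1, hqA1 2, hAp1, hAp2, norm_sq_q]
    simp only [qe0_re, qe0_imI, qe0_imJ, qe0_imK, qe1_re, qe1_imI, qe1_imJ, qe1_imK, qe2_re, qe2_imI, qe2_imJ, qe2_imK, qe3_re, qe3_imI, qe3_imJ, qe3_imK, Matrix.cons_val_one, Matrix.cons_val_two, Matrix.cons_val_three,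
      Matrix.head_cons, Matrix.tail_cons, Matrix.cons_val_zero,
      Quaternion.re_sub, Quaternion.re_add, Quaternion.re_mul, Quaternion.re_smul,
      Quaternion.imI_sub, Quaternion.imI_add, Quaternion.imI_mul, Quaternion.imI_smul,
      Quaternion.imJ_sub, Quaternion.imJ_add, Quaternion.imJ_mul, Quaternion.imJ_smul,
      Quaternion.imK_sub, Quaternion.imK_add, Quaternion.imK_mul, Quaternion.imK_smul,
      Quaternion.re_neg, Quaternion.imI_neg, Quaternion.imJ_neg, Quaternion.imK_neg,
      smul_eq_mul]
    ring
  have hF13 : ‖curv (Aminus ρ) 1 3 p‖^2 = ((1:ℝ)/4) * (rpd 0 (rlog ρ) p) * (rpd 0 (rlog ρ) p) * (rpd 0 (rlog ρ) p) * (rpd 0 (rlog ρ) p) + ((1:ℝ)/4) * (rpd 0 (rlog ρ) p) * (rpd 0 (rlog ρ) p) * (rpd 1 (rlog ρ) p) * (rpd 1 (rlog ρ) p) + ((1:ℝ)/2) * (rpd 0 (rlog ρ) p) * (rpd 0 (rlog ρ) p) * (rpd 1 (rpd 1 (rlog ρ)) p) + ((1:ℝ)/2) * (rpd 0 (rlog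 ρ) p) * (rpd 0 (rlog ρ) p) * (rpd 2 (rlog ρ) p) * (rpd 2 (rlog ρ) p) + ((1:ℝ)/4) * (rpd 0 (rlog ρ) p) * (rpd 0 (rlog ρ) p) * (rpd 3 (rlog ρ) p) * (rpd 3 (rlog ρ) p) + ((1:ℝ)/2) * (rpd 0 (rlog ρ) p) * (rpd 0 (rlog ρ) p) * (rpd 3 (rpd 3 (rlog ρ)) p) + ((-1:ℝ)/2) * (rpd 0 (rlog ρ) p) * (rpd 1 (rlog ρ) p) * (rpd 1 (rpd 0 (rlog ρ)) p) + ((1:ℝ)/2) * (rpd 0 (rlog ρ) p) * (rpd 1 (rlog ρ) p) * (rpd 3 (rpd 2 (rlog ρ)) p) + ((-1:ℝ)/2) * (rpd 0 (rlog ρ) p) * (rpd 1 (rpd 2 (rlog ρ)) p) * (rpd 3 (rlog ρ) p) + ((-1:ℝ)/2) * (rpd 0 (rlog ρ) p) * (rpd 3 (rlog ρ) p) * (rpd 3 (rpd 0 (rlog ρ)) p) + ((1:ℝ)/4) * (rpd 1 (rlog ρ) p) * (rpd 1 (rlog ρ) p) * (rpd 2 (rlog ρ) p) * (rpd 2 (rlog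 ρ) p) + ((-1:ℝ)/2) * (rpd 1 (rlog ρ) p) * (rpd 1 (rpd 2 (rlog ρ)) p) * (rpd 2 (rlog ρ) p) + ((-1:ℝ)/2) * (rpd 1 (rlog ρ) p) * (rpd 2 (rlog ρ) p) * (rpd 3 (rpd 0 (rlog ρ)) p) + ((1:ℝ)/4) * (rpd 1 (rpd 0 (rlog ρ)) p) * (rpd 1 (rpd 0 (rlog ρ)) p) + ((1:ℝ)/2) * (rpd 1 (rpd 0 (rlog ρ)) p) * (rpd 2 (rlog ρ) p) * (rpd 3 (rlog ρ) p) + ((-1:ℝ)/2) * (rpd 1 (rpd 0 (rlog ρ)) p) * (rpd 3 (rpd 2 (rlog ρ)) p) + ((1:ℝ)/4) * (rpd 1 (rpd 1 (rlog ρ)) p) * (rpd 1 (rpd 1 (rlog ρ)) p) + ((1:ℝ)/2) * (rpd 1 (rpd 1 (rlog ρ)) p) * (rpd 2 (rlog ρ) p) * (rpd 2 (rlog ρ) p) + ((1:ℝ)/2) * (rpd 1 (rpd 1 (rlog ρ)) p) * (rpd 3 (rpd 3 (rlog ρ)) p) + ((1:ℝ)/4) * (rpd 1 (rpd 2 (rlog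 ρ)) p) * (rpd 1 (rpd 2 (rlog ρ)) p) + ((1:ℝ)/2) * (rpd 1 (rpd 2 (rlog ρ)) p) * (rpd 3 (rpd 0 (rlog ρ)) p) + ((1:ℝ)/4) * (rpd 2 (rlog ρ) p) * (rpd 2 (rlog ρ) p) * (rpd 2 (rlog ρ) p) * (rpd 2 (rlog ρ) p) + ((1:ℝ)/4) * (rpd 2 (rlog ρ) p) * (rpd 2 (rlog ρ) p) * (rpd 3 (rlog ρ) p) * (rpd 3 (rlog ρ) p) + ((1:ℝ)/2) * (rpd 2 (rlog ρ) p) * (rpd 2 (rlog ρ) p) * (rpd 3 (rpd 3 (rlog ρ)) p) + ((-1:ℝ)/2) * (rpd 2 (rlog ρ) p) * (rpd 3 (rlog ρ) p) * (rpd 3 (rpd 2 (rlog ρ)) p) + ((1:ℝ)/4) * (rpd 3 (rpd 0 (rlog ρ)) p) * (rpd 3 (rpd 0 (rlog ρ)) p) + ((1:ℝ)/4) * (rpd 3 (rpd 2 (rlog ρ)) p) * (rpd 3 (rpd 2 (rlog ρ)) p) + ((1:ℝ)/4) * (rpd 3 (rpd 3 (rlog ρ)) p) * (rpd 3 (rpd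 3 (rlog ρ)) p) := by
    rw [show curv (Aminus ρ) 1 3 p = qpd 1 (Aminus ρ 3) p - qpd 3 (Aminus ρ 1) p
        + Aminus ρ 1 p * Aminus ρ 3 p - Aminus ρ 3 p * Aminus ρ 1 p from rfl,
      hqA3 1, hqA1 3, hAp1, hAp3, norm_sq_q]
    simp only [qe0_re, qe0_imI, qe0_imJ, qe0_imK, qe1_re, qe1_imI, qe1_imJ, qe1_imK, qe2_re, qe2_imI, qe2_imJ, qe2_imK, qe3_re, qe3_imI, qe3_imJ, qe3_imK, Matrix.cons_val_one, Matrix.cons_val_two, Matrix.cons_val_three,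
      Matrix.head_cons, Matrix.tail_cons, Matrix.cons_val_zero,
      Quaternion.re_sub, Quaternion.re_add, Quaternion.re_mul, Quaternion.re_smul,
      Quaternion.imI_sub, Quaternion.imI_add, Quaternion.imI_mul, Quaternion.imI_smul,
      Quaternion.imJ_sub, Quaternion.imJ_add, Quaternion.imJ_mul, Quaternion.imJ_smul,
      Quaternion.imK_sub, Quaternion.imK_add, Quaternion.imK_mul, Quaternion.imK_smul,
      Quaternion.re_neg, Quaternion.imI_neg, Quaternion.imJ_neg, Quaternion.imK_neg,
      smul_eq_mul]
    ring
  have hF23 : ‖curv (Aminus ρ) 2 3 p‖^2 = ((1:ℝ)/4) * (rpd 0 (rlog ρ) p) * (rpd 0 (rlog ρ) p) * (rpd 0 (rlog ρ) p) * (rpd 0 (rlog ρ) p) + ((1:ℝ)/2) * (rpd 0 (rlog ρ) p) * (rpd 0 (rlog ρ) p) * (rpd 1 (rlog ρ) p) * (rpd 1 (rlog ρ) p) + ((1:ℝ)/4) * (rpd 0 (rlog ρ) p) * (rpd 0 (rlog ρ) p) * (rpd 2 (rlog ρ) p) * (rpd 2 (rlog ρ) p) + ((1:ℝ)/2) * (rpd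 0 (rlog ρ) p) * (rpd 0 (rlog ρ) p) * (rpd 2 (rpd 2 (rlog ρ)) p) + ((1:ℝ)/4) * (rpd 0 (rlog ρ) p) * (rpd 0 (rlog ρ) p) * (rpd 3 (rlog ρ) p) * (rpd 3 (rlog ρ) p) + ((1:ℝ)/2) * (rpd 0 (rlog ρ) p) * (rpd 0 (rlog ρ) p) * (rpd 3 (rpd 3 (rlog ρ)) p) + ((-1:ℝ)/2) * (rpd 0 (rlog ρ) p) * (rpd 2 (rlog ρ) p) * (rpd 2 (rpd 0 (rlog ρ)) p) + ((-1:ℝ)/2) * (rpd 0 (rlog ρ) p) * (rpd 2 (rlog ρ) p) * (rpd 3 (rpd 1 (rlog ρ)) p) + ((1:ℝ)/2) * (rpd 0 (rlog ρ) p) * (rpd 2 (rpd 1 (rlog ρ)) p) * (rpd 3 (rlog ρ) p) + ((-1:ℝ)/2) * (rpd 0 (rlog ρ) p) * (rpd 3 (rlog ρ) p) * (rpd 3 (rpd 0 (rlog ρ)) p) + ((1:ℝ)/4) * (rpd 1 (rlog ρ) p) * (rpd 1 (rlog ρ) p) * (rpd 1 (rlog ρ) p) * (rpd 1 (rlog ρ)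 p) + ((1:ℝ)/4) * (rpd 1 (rlog ρ) p) * (rpd 1 (rlog ρ) p) * (rpd 2 (rlog ρ) p) * (rpd 2 (rlog ρ) p) + ((1:ℝ)/2) * (rpd 1 (rlog ρ) p) * (rpd 1 (rlog ρ) p) * (rpd 2 (rpd 2 (rlog ρ)) p) + ((1:ℝ)/4) * (rpd 1 (rlog ρ) p) * (rpd 1 (rlog ρ) p) * (rpd 3 (rlog ρ) p) * (rpd 3 (rlog ρ) p) + ((1:ℝ)/2) * (rpd 1 (rlog ρ) p) * (rpd 1 (rlog ρ) p) * (rpd 3 (rpd 3 (rlog ρ)) p) + ((-1:ℝ)/2) * (rpd 1 (rlog ρ) p) * (rpd 2 (rlog ρ) p) * (rpd 2 (rpd 1 (rlog ρ)) p) + ((1:ℝ)/2) * (rpd 1 (rlog ρ) p) * (rpd 2 (rlog ρ) p) * (rpd 3 (rpd 0 (rlog ρ)) p) + ((-1:ℝ)/2) * (rpd 1 (rlog ρ) p) * (rpd 2 (rpd 0 (rlog ρ)) p) * (rpd 3 (rlog ρ) p) + ((-1:ℝ)/2) * (rpd 1 (rlog ρ) p) * (rpd 3 (rlog ρ) p)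 * (rpd 3 (rpd 1 (rlog ρ)) p) + ((1:ℝ)/4) * (rpd 2 (rpd 0 (rlog ρ)) p) * (rpd 2 (rpd 0 (rlog ρ)) p) + ((1:ℝ)/2) * (rpd 2 (rpd 0 (rlog ρ)) p) * (rpd 3 (rpd 1 (rlog ρ)) p) + ((1:ℝ)/4) * (rpd 2 (rpd 1 (rlog ρ)) p) * (rpd 2 (rpd 1 (rlog ρ)) p) + ((-1:ℝ)/2) * (rpd 2 (rpd 1 (rlog ρ)) p) * (rpd 3 (rpd 0 (rlog ρ)) p) + ((1:ℝ)/4) * (rpd 2 (rpd 2 (rlog ρ)) p) * (rpd 2 (rpd 2 (rlog ρ)) p) + ((1:ℝ)/2) * (rpd 2 (rpd 2 (rlog ρ)) p) * (rpd 3 (rpd 3 (rlog ρ)) p) + ((1:ℝ)/4) * (rpd 3 (rpd 0 (rlog ρ)) p) * (rpd 3 (rpd 0 (rlog ρ)) p) + ((1:ℝ)/4) * (rpd 3 (rpd 1 (rlog ρ)) p) * (rpd 3 (rpd 1 (rlog ρ)) p) + ((1:ℝ)/4) * (rpd 3 (rpd 3 (rlog ρ)) p) * (rpd 3 (rpd 3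 (rlog ρ)) p) := by
    rw [show curv (Aminus ρ) 2 3 p = qpd 2 (Aminus ρ 3) p - qpd 3 (Aminus ρ 2) p
        + Aminus ρ 2 p * Aminus ρ 3 p - Aminus ρ 3 p * Aminus ρ 2 p from rfl,
      hqA3 2, hqA2 3, hAp2, hAp3, norm_sq_q]
    simp only [qe0_re, qe0_imI, qe0_imJ, qe0_imK, qe1_re, qe1_imI, qe1_imJ, qe1_imK, qe2_re, qe2_imI, qe2_imJ, qe2_imK, qe3_re, qe3_imI, qe3_imJ, qe3_imK, Matrix.cons_val_one, Matrix.cons_val_two, Matrix.cons_val_three,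
      Matrix.head_cons, Matrix.tail_cons, Matrix.cons_val_zero,
      Quaternion.re_sub, Quaternion.re_add, Quaternion.re_mul, Quaternion.re_smul,
      Quaternion.imI_sub, Quaternion.imI_add, Quaternion.imI_mul, Quaternion.imI_smul,
      Quaternion.imJ_sub, Quaternion.imJ_add, Quaternion.imJ_mul, Quaternion.imJ_smul,
      Quaternion.imK_sub, Quaternion.imK_add, Quaternion.imK_mul, Quaternion.imK_smul,
      Quaternion.re_neg, Quaternion.imI_neg, Quaternion.imJ_neg, Quaternion.imK_neg,
      smul_eq_mul]
    ring
  have E0 := hW0 p hp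
  simp only [Fin.sum_univ_four] at E0
  have E1_0 := hGz 0 p hp
  simp only [Fin.sum_univ_four] at E1_0
  have E1_1 := hGz 1 p hp
  simp only [Fin.sum_univ_four] at E1_1
  rw [tcA 1 0, hs 1 0] at E1_1
  have E1_2 := hGz 2 p hp
  simp only [Fin.sum_univ_four] at E1_2
  rw [tcA 2 0, hs 2 0, tcA 2 1, hs 2 1] at E1_2
  have E1_3 := hGz 3 p hp
  simp only [Fin.sum_univ_four] at E1_3
  rw [tcA 3 0, hs 3 0, tcA 3 1, hs 3 1, tcA 3 2, hs 3 2] at E1_3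
  have E2_0 := hE2 0
  simp only [Fin.sum_univ_four] at E2_0
  have E2_1 := hE2 1
  simp only [Fin.sum_univ_four] at E2_1
  rw [tcB 1 0, hs 1 0] at E2_1
  have E2_2 := hE2 2
  simp only [Fin.sum_univ_four] at E2_2
  rw [tcB 2 0, hs 2 0, tcB 2 1, hs 2 1] at E2_2
  have E2_3 := hE2 3
  simp only [Fin.sum_univ_four] at E2_3
  rw [tcB 3 0, hs 3 0, tcB 3 1, hs 3 1, tcB 3 2, hs 3 2] at E2_3
  rw [hF01, hF02, hF03, hF12, hF13, hF23, hRHS]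
  simp only [Fin.sum_univ_four]
  rw [hs 1 0, hs 2 0, hs 2 1, hs 3 0, hs 3 1, hs 3 2]
  linear_combination ((1:ℝ)/4) * E2_0 + ((1:ℝ)/4) * E2_1 + ((1:ℝ)/4) * E2_2 + ((1:ℝ)/4) * E2_3 + (-((1:ℝ)/2)) * (rpd 0 (rlog ρ) p) * E1_0 + (-((1:ℝ)/2)) * (rpd 1 (rlog ρ) p) * E1_1 + (-((1:ℝ)/2)) * (rpd 2 (rlog ρ) p) * E1_2 + (-((1:ℝ)/2)) * (rpd 3 (rlog ρ) p) * E1_3 + (((1:ℝ)/4) * ((rpd 0 (rpd 0 (rlog ρ)) p) + (rpd 1 (rpd 1 (rlog ρ)) p) + (rpd 2 (rpd 2 (rlog ρ)) p) + (rpd 3 (rpd 3 (rlog ρ)) p) + (rpd 0 (rlog ρ) p) * (rpd 0 (rlog ρ) p) + (rpd 1 (rlog ρ) p) * (rpd 1 (rlog ρ) p) + (rpd 2 (rlog ρ) p) * (rpd 2 (rlog ρ) p) + (rpd 3 (rlog ρ) p) * (rpd 3 (rlog ρ) p)) + ((1:ℝ)/2) * ((rpd 0 (rlog ρ) p) * (rpd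 0 (rlog ρ) p) + (rpd 1 (rlog ρ) p) * (rpd 1 (rlog ρ) p) + (rpd 2 (rlog ρ) p) * (rpd 2 (rlog ρ) p) + (rpd 3 (rlog ρ) p) * (rpd 3 (rlog ρ) p))) * E0
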